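/- arXiv:1601.01505 — 4 statements merged into one kernel-verified Lean document; each statement's English description precedes it below -/
import Mathlib

section
/- Let A be a unital complex Banach algebra, p a polynomial with distinct roots, and E_p(A) = {a ∈ A : p(a) = 0}. If a_0 ∈ E_p(A), b ∈ A, and a_0 + λ b ∈ E_p(A) for all real λ ∈ [0,1], then a_0 + λ b ∈ E_p(A) for all complex λ. -/
theorem stmt_3 {A : Type*} [NormedRing A] [NormedAlgebra ℂ A] [CompleteSpace A]
    {n : ℕ} (lam : Fin n → ℂ) (hlam : Function.Injective lam)
    (a₀ b : A)
    (h₀ : (List.ofFn fun i => a₀ - lam i • (1 : A)).prod = 0)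
    (hseg : ∀ t : ℝ, t ∈ Set.Icc (0 : ℝ) 1 →
      (List.ofFn fun i => (a₀ + (t : ℂ) • b) - lam i • (1 : A)).prod = 0) :
    ∀ z : ℂ, (List.ofFn fun i => (a₀ + z • b) - lam i • (1 : A)).prod = 0 := by
  set f : ℂ → A := fun z => (List.ofFn fun i => (a₀ + z • b) - lam i • (1 : A)).prod with hf
  have key : ∀ l : List (Fin n),
      AnalyticOnNhd ℂ (fun z : ℂ => ((l.map fun i => (a₀ + z • b) - lam i • (1 : A)).prod : A))
        Set.univ := by
    intro l
    induction l with
    | nil => simpa using (analyticOnNhd_const : AnalyticOnNhd ℂ (fun _ : ℂ => (1 : A)) Set.univ)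
    | cons i l ih =>
      simp only [List.map_cons, List.prod_cons]
      refine AnalyticOnNhd.mul ?_ ih
      exact (analyticOnNhd_const.add ((analyticOnNhd_id).smul analyticOnNhd_const)).sub
        analyticOnNhd_const
  have hfan : AnalyticOnNhd ℂ f Set.univ := by
    have := key (List.finRange n)
    simpa [hf, List.ofFn_eq_map] using this
  have hu : Filter.Tendsto (fun k : ℕ => ((1 / (k + 1) : ℝ) : ℂ)) Filter.atTop (nhdsWithin 0 {(0:ℂ)}ᶜ) := by
    apply tendsto_nhdsWithin_of_tendsto_nhds_of_eventually_within
    · have h1 : Filter.Tendsto (fun k : ℕ => (1 / (k + 1) : ℝ)) Filter.atTop (nhds 0) :=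
        tendsto_one_div_add_atTop_nhds_zero_nat
      have := (Complex.continuous_ofReal.tendsto 0).comp h1
      simpa [Function.comp_def, Complex.ofReal_inv, Complex.ofReal_add, Complex.ofReal_natCast] using this
    · filter_upwards with k
      simp only [Set.mem_compl_iff, Set.mem_singleton_iff]
      intro h
      have : (1 / (k + 1) : ℝ) = 0 := by exact_mod_cast h
      have : (0:ℝ) < 1 / (k + 1) := by positivity
      linarith
  have hfreq : ∃ᶠ z in nhdsWithin 0 {(0:ℂ)}ᶜ, f z = 0 := by
    apply hu.frequently
    apply Filter.Frequently.of_forall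
    intro k
    have hk : (1 / (k + 1) : ℝ) ∈ Set.Icc (0:ℝ) 1 := by
      constructor
      · positivity
      · rw [div_le_one (by positivity)]; linarith [Nat.cast_nonneg (α := ℝ) k]
    exact hseg _ hk
  have := hfan.eqOn_zero_of_preconnected_of_frequently_eq_zero isPreconnected_univ
    (Set.mem_univ 0) hfreq
  intro z
  exact this (Set.mem_univ z)
end

section
/- Let A be a unital complex Banach algebra, p a polynomial with distinct complex roots, and C a connected component of E_p(A) = {a ∈ A : p(a) = 0}. If every element of A lying on a nondegenerate complex line through each point of C stays in E_p(A) whenever the segment from the point stays in E_p(A), and if C contains two distinct points joined by a polygonal path in E_p(A), then C contains a complex affine line through any of its points, and in particular C is unbounded. -/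
open Polynomial

section Aux

variable {A : Type*} [Ring A] [Algebra ℂ A] {n : ℕ}

private lemma conj_list_prod (u v : A) (h1 : u * v = 1) (h2 : v * u = 1) :
    ∀ l : List A, (l.map fun a => u * a * v).prod = u * l.prod * v := by
  intro l
  induction l with
  | nil => simp [h1]
  | cons a l ih =>
    rw [List.map_cons, List.prod_cons, List.prod_cons, ih,
      show u * a * v * (u * l.prod * v) = u * a * (v * u) * (l.prod * v) by
        simp only [mul_assoc], h2, mul_one]
    simp only [mul_assoc]

private lemma aeval_nodal_eq (lam : Fin n → ℂ) (y : A) :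
    Polynomial.aeval y (Lagrange.nodal Finset.univ lam) =
      (List.ofFn fun i => y - lam i • (1 : A)).prod := by
  rw [Lagrange.nodal_eq, ← Fin.prod_ofFn, map_list_prod, List.map_ofFn]
  have : ((⇑(Polynomial.aeval y)) ∘ fun i => X - C (lam i)) =
      fun i : Fin n => y - lam i • (1 : A) := by
    funext i; simp [Function.comp, Algebra.algebraMap_eq_smul_one]
  rw [this]

private noncomputable def lagE (lam : Fin n → ℂ) (y : A) (i : Fin n) : A :=
  Polynomial.aeval y (Lagrange.basis Finset.univ lam i)

private lemma nodal_dvd_of_root (lam : Fin n → ℂ) (hlam : Function.Injective lam)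
    (q : ℂ[X]) (hq : ∀ i, Polynomial.eval (lam i) q = 0) :
    Lagrange.nodal Finset.univ lam ∣ q := by
  rw [Lagrange.nodal_eq]
  refine Finset.prod_dvd_of_coprime ?_ fun i _ => dvd_iff_isRoot.mpr (hq i)
  exact fun i _ j _ hij => Polynomial.pairwise_coprime_X_sub_C hlam hij

private lemma lagE_sum (lam : Fin n → ℂ) (hlam : Function.Injective lam) (hn : 0 < n) (y : A) :
    ∑ i, lagE lam y i = 1 := by
  have : Nonempty (Fin n) := ⟨⟨0, hn⟩⟩
  have hs := Lagrange.sum_basis (fun a _ b _ h => hlam h) (Finset.univ_nonempty (α := Fin n))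
  have h2 := congrArg (Polynomial.aeval y) hs
  rw [map_sum, map_one] at h2
  simpa [lagE] using h2

private lemma lagE_aeval_eq_zero (lam : Fin n → ℂ) (hlam : Function.Injective lam) {y : A}
    (hy : Polynomial.aeval y (Lagrange.nodal Finset.univ lam) = 0)
    {q : ℂ[X]} (hq : ∀ i, Polynomial.eval (lam i) q = 0) :
    Polynomial.aeval y q = 0 := by
  obtain ⟨r, hr⟩ := nodal_dvd_of_root lam hlam q hq
  rw [hr, map_mul, hy, zero_mul]

private lemma eval_basis (lam : Fin n → ℂ) (hlam : Function.Injective lam) (i k : Fin n) :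
    Polynomial.eval (lam k) (Lagrange.basis Finset.univ lam i) = if i = k then 1 else 0 := by
  split
  · next h => subst h; exact Lagrange.eval_basis_self (fun a _ b _ h => hlam h) (Finset.mem_univ i)
  · next h => exact Lagrange.eval_basis_of_ne h (Finset.mem_univ k)

variable (lam : Fin n → ℂ)

private lemma lagE_orth (hlam : Function.Injective lam) {y : A}
    (hy : Polynomial.aeval y (Lagrange.nodal Finset.univ lam) = 0)
    {i j : Fin n} (hij : i ≠ j) : lagE lam y i * lagE lam y j = 0 := by
  rw [lagE, lagE, ← map_mul]
  refine lagE_aeval_eq_zero lam hlam hy fun k => ?_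
  rw [eval_mul, eval_basis lam hlam, eval_basis lam hlam]
  by_cases h : i = k
  · subst h; simp [Ne.symm hij]
  · simp [h]

private lemma lagE_idem (hlam : Function.Injective lam) {y : A}
    (hy : Polynomial.aeval y (Lagrange.nodal Finset.univ lam) = 0)
    (i : Fin n) : lagE lam y i * lagE lam y i = lagE lam y i := by
  have h : Polynomial.aeval y (Lagrange.basis Finset.univ lam i * Lagrange.basis Finset.univ lam i
      - Lagrange.basis Finset.univ lam i) = 0 := by
    refine lagE_aeval_eq_zero lam hlam hy fun k => ?_
    rw [eval_sub, eval_mul, eval_basis lam hlam]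
    by_cases h : i = k <;> simp [h]
  rw [map_sub, map_mul] at h
  rw [← sub_eq_zero]
  exact h

private lemma lagE_eig_right (hlam : Function.Injective lam) {y : A}
    (hy : Polynomial.aeval y (Lagrange.nodal Finset.univ lam) = 0)
    (i : Fin n) : y * lagE lam y i = lam i • lagE lam y i := by
  have h : Polynomial.aeval y ((X - C (lam i)) * Lagrange.basis Finset.univ lam i) = 0 := by
    refine lagE_aeval_eq_zero lam hlam hy fun k => ?_
    rw [eval_mul, eval_sub, eval_X, eval_C, eval_basis lam hlam]
    by_cases h : i = k
    · subst h; simp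
    · simp [h]
  rw [map_mul, map_sub, aeval_X, aeval_C] at h
  have h' : (y - lam i • (1 : A)) * lagE lam y i = 0 := by
    rwa [Algebra.algebraMap_eq_smul_one] at h
  rw [sub_mul, smul_mul_assoc, one_mul, sub_eq_zero] at h'
  exact h'

private lemma lagE_eig_left (hlam : Function.Injective lam) {y : A}
    (hy : Polynomial.aeval y (Lagrange.nodal Finset.univ lam) = 0)
    (i : Fin n) : lagE lam y i * y = lam i • lagE lam y i := by
  have h : Polynomial.aeval y (Lagrange.basis Finset.univ lam i * (X - C (lam i))) = 0 := by
    rw [mul_comm]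
    refine lagE_aeval_eq_zero lam hlam hy fun k => ?_
    rw [eval_mul, eval_sub, eval_X, eval_C, eval_basis lam hlam]
    by_cases h : i = k
    · subst h; simp
    · simp [h]
  rw [map_mul, map_sub, aeval_X, aeval_C] at h
  have h' : lagE lam y i * (y - lam i • (1 : A)) = 0 := by
    rwa [Algebra.algebraMap_eq_smul_one] at h
  rw [mul_sub, mul_smul_comm, mul_one, sub_eq_zero] at h'
  exact h'

end Aux

theorem stmt_6 {A : Type*} [NormedRing A] [NormedAlgebra ℂ A] [CompleteSpace A]
    {n : ℕ} (lam : Fin n → ℂ) (hlam : Function.Injective lam)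
    (E : Set A) (hE : E = {a : A | (List.ofFn fun i => a - lam i • (1 : A)).prod = 0})
    (x : A) (hx : x ∈ E) (C : Set A) (hC : C = connectedComponentIn E x)
    (hline : ∀ a₀ ∈ C, ∀ b : A, b ≠ 0 →
      (∀ t : ℝ, t ∈ Set.Icc (0 : ℝ) 1 → a₀ + (t : ℂ) • b ∈ E) →
      ∀ z : ℂ, a₀ + z • b ∈ E)
    (hpoly : ∃ a₁ ∈ C, ∃ a₂ ∈ C, a₁ ≠ a₂ ∧
      ∃ (m : ℕ) (v : Fin (m + 1) → A), v 0 = a₁ ∧ v (Fin.last m) = a₂ ∧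
        ∀ i : Fin m, ∀ t : ℝ, t ∈ Set.Icc (0 : ℝ) 1 →
          (1 - t) • v i.castSucc + t • v i.succ ∈ E) :
    (∀ a₀ ∈ C, ∃ b : A, b ≠ 0 ∧ ∀ z : ℂ, a₀ + z • b ∈ C) ∧
    ¬ Bornology.IsBounded C := by
  classical
  obtain ⟨a₁, ha₁, a₂, ha₂, hne12, -⟩ := hpoly
  rcases Nat.eq_zero_or_pos n with hn0 | hn
  · exfalso
    subst hn0
    have h1 : (0 : A) = 1 := by
      have hx' := hx; rw [hE] at hx'; simpa using hx'.symm
    have : Subsingleton A := subsingleton_of_zero_eq_one h1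
    exact hne12 (Subsingleton.elim _ _)
  have hCE : C ⊆ E := hC ▸ connectedComponentIn_subset E x
  have hmemE : ∀ y : A, y ∈ E ↔ Polynomial.aeval y (Lagrange.nodal Finset.univ lam) = 0 := by
    intro y; rw [hE, Set.mem_setOf_eq, aeval_nodal_eq]
  have main : ∀ a₀ ∈ C, ∃ b : A, b ≠ 0 ∧ ∀ z : ℂ, a₀ + z • b ∈ C := by
    intro a₀ ha₀
    have ha₀E : Polynomial.aeval a₀ (Lagrange.nodal Finset.univ lam) = 0 :=
      (hmemE a₀).mp (hCE ha₀)
    have hsum : ∑ i, lagE lam a₀ i = (1 : A) := lagE_sum lam hlam hn a₀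
    have heR : ∀ i, a₀ * lagE lam a₀ i = lam i • lagE lam a₀ i :=
      lagE_eig_right lam hlam ha₀E
    have heL : ∀ i, lagE lam a₀ i * a₀ = lam i • lagE lam a₀ i :=
      lagE_eig_left lam hlam ha₀E
    -- find a nonzero off-diagonal compression
    have hex : ∃ i j : Fin n, ∃ c : A, i ≠ j ∧ lagE lam a₀ i * c * lagE lam a₀ j ≠ 0 := by
      by_contra hcon
      push_neg at hcon
      -- a₀ is central
      have hrep : ∀ d : A, ∑ i, ∑ j, lagE lam a₀ i * d * lagE lam a₀ j = d := by
        intro d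
        have h2 : ∑ i, ∑ j, lagE lam a₀ i * d * lagE lam a₀ j
            = ((∑ i, lagE lam a₀ i) * d) * (∑ j, lagE lam a₀ j) := by
          rw [Finset.sum_mul, Finset.sum_mul]
          simp_rw [Finset.mul_sum]
        rw [h2, hsum, one_mul, mul_one]
      have hdiag : ∀ d : A, ∀ i : Fin n,
          ∑ j, lam i • (lagE lam a₀ i * d * lagE lam a₀ j)
            = lam i • (lagE lam a₀ i * d * lagE lam a₀ i) ∧
          ∑ j, lam j • (lagE lam a₀ i * d * lagE lam a₀ j)
            = lam i • (lagE lam a₀ i * d * lagE lam a₀ i) := by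
        intro d i
        constructor
        · refine Finset.sum_eq_single i (fun j _ hji => ?_)
            (fun h => absurd (Finset.mem_univ i) h)
          rw [hcon i j d (Ne.symm hji), smul_zero]
        · refine Finset.sum_eq_single i (fun j _ hji => ?_)
            (fun h => absurd (Finset.mem_univ i) h)
          rw [hcon i j d (Ne.symm hji), smul_zero]
      have hcent : ∀ d : A, a₀ * d = d * a₀ := by
        intro d
        have hL : a₀ * d = ∑ i, lam i • (lagE lam a₀ i * d * lagE lam a₀ i) := by
          conv_lhs => rw [← hrep d]
          rw [Finset.mul_sum]
          refine Finset.sum_congr rfl fun i _ => ?_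
          rw [Finset.mul_sum]
          refine Eq.trans (Finset.sum_congr rfl fun j _ => ?_) (hdiag d i).1
          rw [show a₀ * (lagE lam a₀ i * d * lagE lam a₀ j)
              = (a₀ * lagE lam a₀ i) * (d * lagE lam a₀ j) by simp only [mul_assoc],
            heR i, smul_mul_assoc]
          simp only [mul_assoc]
        have hR : d * a₀ = ∑ i, lam i • (lagE lam a₀ i * d * lagE lam a₀ i) := by
          conv_lhs => rw [← hrep d]
          rw [Finset.sum_mul]
          refine Finset.sum_congr rfl fun i _ => ?_
          rw [Finset.sum_mul]
          refine Eq.trans (Finset.sum_congr rfl fun j _ => ?_) (hdiag d i).2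
          rw [mul_assoc, heL j, mul_smul_comm]
        rw [hL, hR]
      -- every point of E near a₀ equals a₀
      set U : A → A := fun y => ∑ i, lagE lam y i * lagE lam a₀ i with hU
      have hUcont : Continuous U := by
        refine continuous_finset_sum _ fun i _ => ?_
        exact ((Lagrange.basis Finset.univ lam i).continuous_aeval).mul continuous_const
      have hU0 : U a₀ = 1 := by
        rw [hU]
        simp only
        rw [Finset.sum_congr rfl fun i _ => lagE_idem lam hlam ha₀E i, hsum]
      obtain ⟨δ, hδpos, hδ⟩ := Metric.continuousAt_iff.mp hUcont.continuousAt 1 one_pos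
      have hloc : ∀ y ∈ E, dist y a₀ < δ → y = a₀ := by
        intro y hyE hyd
        have hyE' := (hmemE y).mp hyE
        have hu : ‖(1 : A) - U y‖ < 1 := by
          have h3 := hδ hyd
          rw [hU0, dist_eq_norm] at h3
          rwa [norm_sub_rev]
        set w : Aˣ := Units.oneSub (1 - U y) hu with hw
        have hwval : (w : A) = U y := by simp [hw]
        have h1 : y * U y = U y * a₀ := by
          rw [hU]
          simp only
          rw [Finset.mul_sum, Finset.sum_mul]
          refine Finset.sum_congr rfl fun i _ => ?_
          rw [← mul_assoc, lagE_eig_right lam hlam hyE' i, smul_mul_assoc,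
            mul_assoc, heL i, mul_smul_comm]
        have h2 : (y - a₀) * U y = 0 := by
          rw [sub_mul, h1, ← hcent (U y), sub_self]
        have h3 : y - a₀ = 0 := by
          calc y - a₀ = (y - a₀) * ((w : A) * ↑w⁻¹) := by rw [Units.mul_inv, mul_one]
            _ = ((y - a₀) * (w : A)) * ↑w⁻¹ := by rw [mul_assoc]
            _ = 0 := by rw [hwval, h2, zero_mul]
        exact sub_eq_zero.mp h3
      -- contradiction with connectedness of C
      have hpc : IsPreconnected C := hC ▸ isPreconnected_connectedComponentIn
      have hone : ∃ aa, aa ∈ C ∧ aa ≠ a₀ := by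
        by_cases h : a₁ = a₀
        · exact ⟨a₂, ha₂, fun h2 => hne12 (h.trans h2.symm)⟩
        · exact ⟨a₁, ha₁, h⟩
      obtain ⟨aa, haaC, haane⟩ := hone
      obtain ⟨zz, hzzC, hzzU, hzzV⟩ := hpc (Metric.ball a₀ δ) {a₀}ᶜ Metric.isOpen_ball
        isOpen_compl_singleton
        (fun y _ => by
          by_cases h : y = a₀
          · left; rw [h]; exact Metric.mem_ball_self hδpos
          · right; exact h)
        ⟨a₀, ha₀, Metric.mem_ball_self hδpos⟩ ⟨aa, haaC, haane⟩
      exact hzzV (hloc zz (hCE hzzC) (Metric.mem_ball.mp hzzU))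
    obtain ⟨i, j, c, hij, hbne⟩ := hex
    set b : A := lagE lam a₀ i * c * lagE lam a₀ j with hb
    have hab : a₀ * b = lam i • b := by
      rw [hb, show a₀ * (lagE lam a₀ i * c * lagE lam a₀ j)
          = (a₀ * lagE lam a₀ i) * (c * lagE lam a₀ j) by simp only [mul_assoc],
        heR i, smul_mul_assoc]
      simp only [mul_assoc]
    have hba : b * a₀ = lam j • b := by
      rw [hb, mul_assoc, heL j, mul_smul_comm]
    have hbb : b * b = 0 := by
      rw [hb, show lagE lam a₀ i * c * lagE lam a₀ j * (lagE lam a₀ i * c * lagE lam a₀ j)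
          = lagE lam a₀ i * c * ((lagE lam a₀ j * lagE lam a₀ i) * (c * lagE lam a₀ j)) by
          simp only [mul_assoc],
        lagE_orth lam hlam ha₀E (Ne.symm hij), zero_mul, mul_zero]
    have hlamne : lam j - lam i ≠ 0 := sub_ne_zero.mpr fun h => hij (hlam h).symm
    have hmem : ∀ z : ℂ, a₀ + z • b ∈ E := by
      intro z
      set s : ℂ := z / (lam j - lam i) with hs
      set u : A := 1 + s • b with hu
      set v : A := 1 - s • b with hv
      have hsbsb : (s • b) * (s • b) = 0 := by
        rw [smul_mul_smul_comm, hbb, smul_zero]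
      have huv : u * v = 1 := by
        rw [hu, hv, mul_sub, mul_one, add_mul, one_mul, hsbsb, add_zero,
          add_sub_cancel_right]
      have hvu : v * u = 1 := by
        rw [hu, hv, mul_add, mul_one, sub_mul, one_mul, hsbsb, sub_zero,
          sub_add_cancel]
      have hconj : u * a₀ * v = a₀ + z • b := by
        have h1 : u * a₀ = a₀ + (s * lam j) • b := by
          rw [hu, add_mul, one_mul, smul_mul_assoc, hba, smul_smul]
        have h2 : (a₀ + (s * lam j) • b) * v = a₀ + (s * lam j) • b - (s * lam i) • b := by
          rw [hv, mul_sub, mul_one, add_mul]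
          have h3 : a₀ * (s • b) = (s * lam i) • b := by
            rw [mul_smul_comm, hab, smul_smul]
          have h4 : ((s * lam j) • b) * (s • b) = 0 := by
            rw [smul_mul_smul_comm, hbb, smul_zero]
          rw [h3, h4, add_zero]
        rw [h1, h2, add_sub_assoc, ← sub_smul]
        have : s * lam j - s * lam i = z := by
          rw [← mul_sub, hs, div_mul_cancel₀ _ hlamne]
        rw [this]
      rw [hE, Set.mem_setOf_eq]
      have hlist : (List.ofFn fun k => (a₀ + z • b) - lam k • (1 : A))
          = (List.ofFn fun k => a₀ - lam k • (1 : A)).map fun d => u * d * v := by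
        rw [List.map_ofFn]
        congr 1
        funext k
        show a₀ + z • b - lam k • (1 : A) = u * (a₀ - lam k • (1 : A)) * v
        have hexp : u * (a₀ - lam k • (1 : A)) * v
            = u * a₀ * v - u * (lam k • (1 : A)) * v := by
          rw [mul_sub u a₀ (lam k • (1 : A)), sub_mul (u * a₀) (u * (lam k • (1 : A))) v]
        have h5 : u * (lam k • (1 : A)) * v = lam k • (1 : A) := by
          rw [mul_smul_comm, mul_one, smul_mul_assoc, huv]
        rw [hexp, hconj, h5]
      rw [hlist, conj_list_prod u v huv hvu]
      have hP0 : (List.ofFn fun k => a₀ - lam k • (1 : A)).prod = 0 := by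
        have := hCE ha₀
        rwa [hE, Set.mem_setOf_eq] at this
      rw [hP0, mul_zero, zero_mul]
    have hCa : connectedComponentIn E x = connectedComponentIn E a₀ :=
      connectedComponentIn_eq (hC ▸ ha₀)
    have hcont : Continuous fun z : ℂ => a₀ + z • b :=
      continuous_const.add (continuous_id.smul continuous_const)
    have hrange : Set.range (fun z : ℂ => a₀ + z • b) ⊆ C := by
      rw [hC, hCa]
      refine IsPreconnected.subset_connectedComponentIn
        (isConnected_range hcont).isPreconnected ⟨0, by simp⟩ ?_
      rintro _ ⟨z, rfl⟩
      exact hmem z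
    exact ⟨b, hbne, fun z => hrange ⟨z, rfl⟩⟩
  refine ⟨main, ?_⟩
  intro hbd
  obtain ⟨b, hbne, hbl⟩ := main a₁ ha₁
  obtain ⟨r, hr⟩ := hbd.subset_closedBall 0
  have hbpos : (0 : ℝ) < ‖b‖ := norm_pos_iff.mpr hbne
  set R : ℝ := max r 0 with hR
  set z : ℂ := (((R + ‖a₁‖ + 1) / ‖b‖ : ℝ) : ℂ) with hz
  have hmem := hbl z
  have h1 : ‖a₁ + z • b‖ ≤ R := by
    have h2 := hr hmem
    rw [Metric.mem_closedBall, dist_zero_right] at h2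
    exact h2.trans (le_max_left r 0)
  have h2 : ‖z • b‖ - ‖a₁‖ ≤ ‖a₁ + z • b‖ := by
    have h3 : ‖z • b‖ ≤ ‖a₁ + z • b‖ + ‖a₁‖ := by
      calc ‖z • b‖ = ‖(a₁ + z • b) - a₁‖ := by congr 1; abel
        _ ≤ ‖a₁ + z • b‖ + ‖a₁‖ := norm_sub_le _ _
    linarith
  have h3 : ‖z • b‖ = R + ‖a₁‖ + 1 := by
    have hnn : (0 : ℝ) ≤ (R + ‖a₁‖ + 1) / ‖b‖ := by
      apply div_nonneg _ hbpos.le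
      have : (0:ℝ) ≤ R := le_max_right r 0
      positivity
    rw [norm_smul, hz, Complex.norm_real, Real.norm_eq_abs, abs_of_nonneg hnn,
      div_mul_cancel₀ _ hbpos.ne']
  rw [h3] at h2
  linarith
end

section
/- Let A be a unital complex Banach algebra and a ∈ A with a² = a (an idempotent). If a commutes with every element of A (i.e., a is central), then the connected component of a in the set E(A) of idempotents of A is the singleton {a}. -/
theorem stmt_10 {A : Type*} [NormedRing A] [NormedAlgebra ℂ A] [CompleteSpace A]
    (a : A) (ha : a * a = a) (hc : ∀ b : A, a * b = b * a) :
    connectedComponentIn {e : A | e * e = e} a = {a} := by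
  set S : Set A := {e : A | e * e = e} with hS
  have haS : a ∈ S := ha
  -- key: any idempotent within distance 1 of a equals a
  have key : ∀ e ∈ S, dist e a < 1 → e = a := by
    intro e he hd
    have h3 : a * e = e * a := hc e
    set d := e - a with hdd
    have hcube : d * d * d = d := by
      have he' : e * e = e := he
      have h7 : ∀ x : A, e * (e * x) = e * x := fun x => by rw [← mul_assoc, he']
      have h8 : ∀ x : A, a * (a * x) = a * x := fun x => by rw [← mul_assoc, ha]
      have h3' : ∀ x : A, a * (e * x) = e * (a * x) := fun x => by
        rw [← mul_assoc, h3, mul_assoc]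
      simp only [hdd, mul_sub, sub_mul, mul_assoc, he', ha, h3, h3', h7, h8]
      abel
    have hn1 : ‖d‖ ≤ ‖d‖ * ‖d‖ * ‖d‖ := by
      calc ‖d‖ = ‖d * d * d‖ := by rw [hcube]
        _ ≤ ‖d * d‖ * ‖d‖ := norm_mul_le _ _
        _ ≤ ‖d‖ * ‖d‖ * ‖d‖ := by
            gcongr; exact norm_mul_le _ _
    have hlt : ‖d‖ < 1 := by
      rwa [hdd, ← dist_eq_norm]
    have hz : ‖d‖ = 0 := by nlinarith [norm_nonneg d]
    have : d = 0 := norm_eq_zero.mp hz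
    rw [hdd] at this
    exact sub_eq_zero.mp this
  apply Set.eq_singleton_iff_unique_mem.mpr
  refine ⟨mem_connectedComponentIn haS, ?_⟩
  intro x hx
  have hT : IsPreconnected (connectedComponentIn S a) :=
    (isConnected_connectedComponentIn_iff.mpr haS).isPreconnected
  have hTS : connectedComponentIn S a ⊆ S := connectedComponentIn_subset S a
  have hcover : connectedComponentIn S a ⊆
      Metric.ball a (1/2) ∪ (Metric.closedBall a (1/2))ᶜ := by
    intro y hy
    rcases lt_or_ge (dist y a) 1 with h | h
    · left
      have := key y (hTS hy) h
      simp [this, Metric.mem_ball]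
    · right
      simp only [Set.mem_compl_iff, Metric.mem_closedBall, not_le]
      linarith
  have hdisj : Disjoint (Metric.ball a (1/2)) (Metric.closedBall a (1/2))ᶜ :=
    Set.disjoint_compl_right_iff_subset.mpr Metric.ball_subset_closedBall
  have hsub : connectedComponentIn S a ⊆ Metric.ball a (1/2) := by
    apply hT.subset_left_of_subset_union Metric.isOpen_ball
      (Metric.isClosed_closedBall.isOpen_compl) hdisj hcover
    exact ⟨a, mem_connectedComponentIn haS, by simp⟩
  have hx1 : dist x a < 1 := by
    have := hsub hx
    simp only [Metric.mem_ball] at this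
    linarith
  exact key x (hTS hx) hx1
end

section
/- Let A be a unital complex Banach algebra and e ∈ A a non-central idempotent. Then there exists b ∈ A, b ≠ 0, such that e + λb is an idempotent for every λ ∈ ℂ; in particular the connected component of e in E(A) is unbounded. (One can take b = ec - ece or b = ce - ece for suitable c with the chosen b nonzero.) -/
theorem stmt_11 {A : Type*} [NormedRing A] [NormedAlgebra ℂ A] [CompleteSpace A]
    (e : A) (he : e * e = e) (hnc : ∃ c : A, e * c ≠ c * e) :
    (∃ b : A, b ≠ 0 ∧ ∀ z : ℂ, (e + z • b) * (e + z • b) = e + z • b) ∧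
    ¬ Bornology.IsBounded (connectedComponentIn {x : A | x * x = x} e) := by
  obtain ⟨c, hc⟩ := hnc
  have key : ∃ b : A, b ≠ 0 ∧ ∀ z : ℂ, (e + z • b) * (e + z • b) = e + z • b := by
    by_cases h1 : e * c * (1 - e) = 0
    · refine ⟨(1 - e) * c * e, ?_, ?_⟩
      · intro h2
        apply hc
        rw [mul_sub, mul_one] at h1
        have h1' : e * c = e * c * e := sub_eq_zero.mp h1
        rw [sub_mul, one_mul, sub_mul] at h2
        have h2' : c * e = e * c * e := sub_eq_zero.mp h2
        rw [h1', h2']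
      · intro z
        set b := (1 - e) * c * e with hb
        have heb : e * b = 0 := by
          have h0 : e * (1 - e) = 0 := by rw [mul_sub, mul_one, he, sub_self]
          have : e * b = e * (1 - e) * (c * e) := by rw [hb]; simp only [mul_assoc]
          rw [this, h0, zero_mul]
        have hbe : b * e = b := by
          have : b * e = (1 - e) * c * (e * e) := by rw [hb]; simp only [mul_assoc]
          rw [this, he]
        have hbb : b * b = 0 := by
          have : b * b = (1 - e) * c * (e * b) := by rw [hb]; simp only [mul_assoc]
          rw [this, heb, mul_zero]
        rw [add_mul, mul_add, mul_add, he, mul_smul_comm, smul_mul_assoc,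
          smul_mul_assoc, mul_smul_comm, heb, hbe, hbb]
        simp
    · refine ⟨e * c * (1 - e), h1, ?_⟩
      intro z
      set b := e * c * (1 - e) with hb
      have heb : e * b = b := by
        have : e * b = (e * e) * (c * (1 - e)) := by rw [hb]; simp only [mul_assoc]
        rw [this, he, hb]; simp only [mul_assoc]
      have h0 : (1 - e) * e = 0 := by rw [sub_mul, one_mul, he, sub_self]
      have hbe : b * e = 0 := by
        have : b * e = e * c * ((1 - e) * e) := by rw [hb]; simp only [mul_assoc]
        rw [this, h0, mul_zero]
      have hbb : b * b = 0 := by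
        have : b * b = b * e * (c * (1 - e)) := by rw [hb]; simp only [mul_assoc]
        rw [this, hbe, zero_mul]
      rw [add_mul, mul_add, mul_add, he, mul_smul_comm, smul_mul_assoc,
        smul_mul_assoc, mul_smul_comm, heb, hbe, hbb]
      simp
  refine ⟨key, ?_⟩
  obtain ⟨b, hb0, hidem⟩ := key
  have hcont : Continuous (fun z : ℂ => e + z • b) := by continuity
  have hpre : IsPreconnected (Set.range (fun z : ℂ => e + z • b)) := by
    rw [← Set.image_univ]
    exact isPreconnected_univ.image _ hcont.continuousOn
  have hmem : e ∈ Set.range (fun z : ℂ => e + z • b) := ⟨0, by simp⟩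
  have hsub : Set.range (fun z : ℂ => e + z • b) ⊆ {x : A | x * x = x} := by
    rintro x ⟨z, rfl⟩; exact hidem z
  have hrange : Set.range (fun z : ℂ => e + z • b) ⊆
      connectedComponentIn {x : A | x * x = x} e :=
    hpre.subset_connectedComponentIn hmem hsub
  intro hbdd
  obtain ⟨C, hC⟩ := (Metric.isBounded_iff_subset_closedBall 0).mp hbdd
  have hbpos : 0 < ‖b‖ := norm_pos_iff.mpr hb0
  set z : ℂ := (((C + ‖e‖ + 1) / ‖b‖ : ℝ) : ℂ) with hzdef
  have hmemz : e + z • b ∈ connectedComponentIn {x : A | x * x = x} e :=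
    hrange ⟨z, rfl⟩
  have hnorm := hC hmemz
  rw [Metric.mem_closedBall, dist_zero_right] at hnorm
  have hCnn : 0 ≤ C := le_trans (norm_nonneg _) hnorm
  have h1 : ‖z • b‖ = C + ‖e‖ + 1 := by
    rw [norm_smul, hzdef, Complex.norm_real, Real.norm_eq_abs, abs_of_nonneg (by positivity),
      div_mul_cancel₀ _ (ne_of_gt hbpos)]
  have h2 : ‖z • b‖ ≤ ‖e + z • b‖ + ‖e‖ := by
    calc ‖z • b‖ = ‖(e + z • b) - e‖ := by rw [add_sub_cancel_left]
      _ ≤ ‖e + z • b‖ + ‖e‖ := norm_sub_le _ _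
  linarith
end
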